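/- arXiv:2006.04785 — 2 statements merged into one kernel-verified Lean document; each statement's English description precedes it below -/
import Mathlib

section
/- Computation of the conjugate of f(φ) = t·sup_Ω(φ − L): for μ in the dual U of C_ζ(Ω), f*(μ) = ∫_Ω L dμ if μ ≥ 0 and ∫_Ω dμ = t, and f*(μ) = +∞ otherwise. -/
/-!
If `μ ≥ 0` has mass `t` and is carried by `Ω`, then `φ ≤ sup_Ω (φ - L) + L` on `Ω` gives
`∫ φ dμ - f(φ) ≤ ∫ L dμ`; the supremum is finite because `L` outgrows every element of `C_ζ(Ω)`.
Conversely the truncations `min L k` are bounded, hence lie in `C_ζ(Ω)`, satisfy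
`f(min L k) ≤ 0`, and `∫ min L k dμ ↑ ∫ L dμ` by monotone convergence.

Otherwise some bounded continuous `φ ≤ B` has `∫ φ dμ > t B`: a constant when the mass of `μ`
differs from `t`, and a continuous approximation of the Hahn sign of `μ` when `μ` has a
nonzero negative part. Then `∫ cφ dμ - f(cφ) ≥ c (∫ φ dμ - t B) + t inf L → ∞` as `c → ∞`.
-/

open MeasureTheory Set Filter
open scoped Topology ENNReal

noncomputable section

/-- The phase space `T^n × ℝ^n × ℝ` (space, momentum, time). -/
abbrev Phase (n : ℕ) := EuclideanSpace ℝ (Fin n) × EuclideanSpace ℝ (Fin n) × ℝ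

/-- `Ω = T^n × ℝ^n × [0,t]`. -/
def OmegaSet (n : ℕ) (t : ℝ) : Set (Phase n) := {z | z.2.2 ∈ Set.Icc 0 t}

/-- Membership in the weighted space `C_ζ(Ω)`: continuity on `Ω`, growth at most
`1 + |q|^ζ`, and decay of `φ/(1+|q|^ζ)` as `|q| → ∞`, uniformly in `(x,s)`. -/
def MemCzeta {n : ℕ} (ζ t : ℝ) (φ : Phase n → ℝ) : Prop :=
  ContinuousOn φ (OmegaSet n t) ∧
  (∃ M : ℝ, ∀ z ∈ OmegaSet n t, |φ z| ≤ M * (1 + ‖z.2.1‖ ^ ζ)) ∧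
  (∀ ε > 0, ∃ R : ℝ, ∀ z ∈ OmegaSet n t, R ≤ ‖z.2.1‖ → |φ z| ≤ ε * (1 + ‖z.2.1‖ ^ ζ))

/-- Integration of `f` against a signed (Radon) measure `μ`. -/
def sInt {n : ℕ} (μ : SignedMeasure (Phase n)) (f : Phase n → ℝ) : ℝ :=
  ∫ z, f z ∂μ.toJordanDecomposition.posPart - ∫ z, f z ∂μ.toJordanDecomposition.negPart

/-- Membership in `U`, the dual of `C_ζ(Ω)`: Radon measures carried by `Ω` with
`∫ (1+|q|^ζ) d|μ| < ∞`. -/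
def MemU {n : ℕ} (ζ t : ℝ) (μ : SignedMeasure (Phase n)) : Prop :=
  μ.totalVariation (OmegaSet n t)ᶜ = 0 ∧
  Integrable (fun z : Phase n => 1 + ‖z.2.1‖ ^ ζ) μ.totalVariation

/-- `f(φ) = t · sup_Ω (φ − L)`. -/
def fVal {n : ℕ} (t : ℝ) (L : EuclideanSpace ℝ (Fin n) → EuclideanSpace ℝ (Fin n) → ℝ)
    (φ : Phase n → ℝ) : ℝ :=
  t * sSup ((fun z : Phase n => φ z - L z.1 z.2.1) '' OmegaSet n t)

/-- The Legendre–Fenchel conjugate `f*(μ) = sup_{φ ∈ C_ζ(Ω)} (∫ φ dμ − f(φ))`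
(valued in extended reals). -/
def fStar {n : ℕ} (ζ t : ℝ)
    (L : EuclideanSpace ℝ (Fin n) → EuclideanSpace ℝ (Fin n) → ℝ)
    (μ : SignedMeasure (Phase n)) : EReal :=
  ⨆ φ ∈ {φ : Phase n → ℝ | MemCzeta ζ t φ},
    ((sInt μ φ : EReal) - ((fVal t L φ : ℝ) : EReal))

/-- The extended-real integral of a function `g` bounded below against a (nonnegative)
measure: `∫ g⁺ − ∫ g⁻` computed with lower integrals, so that the value `+∞` is kept. -/
def eInt {n : ℕ} (μ : Measure (Phase n)) (g : Phase n → ℝ) : EReal :=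
  ((∫⁻ z, ENNReal.ofReal (g z) ∂μ : ℝ≥0∞) : EReal)
    - ((∫⁻ z, ENNReal.ofReal (-(g z)) ∂μ : ℝ≥0∞) : EReal)

namespace MeasureTheory.SignedMeasure

variable {α : Type*} [MeasurableSpace α]

theorem toJordanDecomposition_negPart_eq_zero_iff {μ : SignedMeasure α} :
    μ.toJordanDecomposition.negPart = 0 ↔ 0 ≤ μ := by
  constructor
  · intro hm
    refine VectorMeasure.le_iff.2 fun i hi => ?_
    rw [zero_apply, μ.apply_eq_posPart_real_sub_negPart_real hi, hm]
    simp
  · intro hμ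
    obtain ⟨S, hS, hpS, hmS⟩ := μ.toJordanDecomposition.mutuallySingular
    have hμS : 0 ≤ μ S := VectorMeasure.le_iff.1 hμ S hS
    rw [μ.apply_eq_posPart_real_sub_negPart_real hS, measureReal_def, hpS] at hμS
    have hmS' : μ.toJordanDecomposition.negPart S = 0 :=
      (measureReal_eq_zero_iff).1 (le_antisymm (by simpa using hμS) measureReal_nonneg)
    exact Measure.measure_univ_eq_zero.1 <| le_antisymm
      ((measure_univ_le_add_compl S).trans (by rw [hmS', hmS, add_zero])) bot_le

end MeasureTheory.SignedMeasure

section Phase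

open scoped BoundedContinuousFunction

variable {n : ℕ}

theorem eInt_mono_ae {ν : Measure (Phase n)} {f g : Phase n → ℝ} (h : f ≤ᵐ[ν] g) :
    eInt ν f ≤ eInt ν g :=
  EReal.sub_le_sub
    (EReal.coe_ennreal_le_coe_ennreal_iff.2 <|
      lintegral_mono_ae <| h.mono fun _ hz => ENNReal.ofReal_le_ofReal hz)
    (EReal.coe_ennreal_le_coe_ennreal_iff.2 <|
      lintegral_mono_ae <| h.mono fun _ hz => ENNReal.ofReal_le_ofReal (neg_le_neg hz))

theorem eInt_eq_integral {ν : Measure (Phase n)} {f : Phase n → ℝ} (hf : Integrable f ν) :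
    eInt ν f = ((∫ z, f z ∂ν : ℝ) : EReal) := by
  rw [eInt, integral_eq_lintegral_pos_part_sub_lintegral_neg_part hf, EReal.coe_sub,
    EReal.coe_ennreal_toReal hf.lintegral_lt_top.ne, EReal.coe_ennreal_toReal]
  exact hf.neg.lintegral_lt_top.ne

theorem abs_min_natCast_le {a c : ℝ} (hc : c ≤ a) (k : ℕ) : |min a k| ≤ |c| + k := by
  rw [abs_le]
  constructor
  · exact le_min (by linarith [neg_abs_le c, k.cast_nonneg (α := ℝ)])
      (by linarith [abs_nonneg c])
  · linarith [min_le_right a k, abs_nonneg c]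

theorem tendsto_integral_min_natCast_eInt {ν : Measure (Phase n)} [IsFiniteMeasure ν]
    {g : Phase n → ℝ} (hg : Measurable g) {c : ℝ} (hc : ∀ z, c ≤ g z) :
    Tendsto (fun k : ℕ => ((∫ z, min (g z) k ∂ν : ℝ) : EReal)) atTop
      (𝓝 (eInt ν g)) := by
  have hint (k : ℕ) : Integrable (fun z => min (g z) k) ν :=
    .of_bound (hg.min measurable_const).aestronglyMeasurable (|c| + k)
      (ae_of_all _ fun z => abs_min_natCast_le (hc z) k)
  have hneg (k : ℕ) (z : Phase n) : ENNReal.ofReal (-min (g z) k) = ENNReal.ofReal (-g z) := by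
    rw [show -min (g z) (k : ℝ) = max (-g z) (-k) from neg_inf _ _, ENNReal.ofReal_max,
      ENNReal.ofReal_of_nonpos (neg_nonpos.2 k.cast_nonneg)]
    simp
  simp_rw [← eInt_eq_integral (hint _), eInt, hneg]
  have hB : ∫⁻ z, ENNReal.ofReal (-g z) ∂ν ≠ ∞ := by
    have := (hint 0).neg.lintegral_lt_top.ne
    simpa only [Pi.neg_apply, hneg 0] using this
  have hA : Tendsto (fun k : ℕ => ∫⁻ z, ENNReal.ofReal (min (g z) k) ∂ν) atTop
      (𝓝 (∫⁻ z, ENNReal.ofReal (g z) ∂ν)) := by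
    refine lintegral_tendsto_of_tendsto_of_monotone
      (fun k => (hg.min measurable_const).ennreal_ofReal.aemeasurable)
      (ae_of_all _ fun z i j hij => ENNReal.ofReal_le_ofReal (min_le_min le_rfl (by simpa)))
      (ae_of_all _ fun z => tendsto_atTop_of_eventually_const (i₀ := ⌈g z⌉₊) fun k hk => ?_)
    rw [min_eq_left ((Nat.le_ceil _).trans (Nat.cast_le.2 hk))]
  rw [← EReal.coe_ennreal_toReal hB]
  simp_rw [sub_eq_add_neg, ← EReal.coe_neg]
  exact (EReal.continuousAt_add (.inr (EReal.coe_ne_bot _)) (.inr (EReal.coe_ne_top _))).tendsto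
    |>.comp ((EReal.tendsto_coe_ennreal.2 hA).prodMk_nhds tendsto_const_nhds)

theorem sInt_eq_integral_of_nonneg {μ : SignedMeasure (Phase n)} (hμ : 0 ≤ μ)
    (f : Phase n → ℝ) : sInt μ f = ∫ z, f z ∂μ.totalVariation := by
  rw [sInt, SignedMeasure.totalVariation,
    SignedMeasure.toJordanDecomposition_negPart_eq_zero_iff.2 hμ]
  simp

theorem sInt_const (μ : SignedMeasure (Phase n)) (c : ℝ) :
    sInt μ (fun _ => c) = μ univ * c := by
  rw [sInt, integral_const, integral_const, μ.apply_eq_posPart_real_sub_negPart_real .univ,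
    smul_eq_mul, smul_eq_mul, sub_mul]

theorem sInt_const_mul (μ : SignedMeasure (Phase n)) (c : ℝ) (f : Phase n → ℝ) :
    sInt μ (fun z => c * f z) = c * sInt μ f := by
  rw [sInt, sInt, integral_const_mul, integral_const_mul, mul_sub]

theorem sInt_sub {μ : SignedMeasure (Phase n)} {f g : Phase n → ℝ}
    (hf : Integrable f μ.totalVariation) (hg : Integrable g μ.totalVariation) :
    sInt μ (fun z => f z - g z) = sInt μ f - sInt μ g := by
  rw [SignedMeasure.totalVariation, integrable_add_measure] at hf hg
  rw [sInt, sInt, sInt, integral_sub hf.1 hg.1, integral_sub hf.2 hg.2]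
  ring

theorem abs_sInt_le {μ : SignedMeasure (Phase n)} {f : Phase n → ℝ}
    (hf : Integrable f μ.totalVariation) :
    |sInt μ f| ≤ ∫ z, |f z| ∂μ.totalVariation := by
  rw [SignedMeasure.totalVariation, integrable_add_measure] at hf
  rw [sInt, SignedMeasure.totalVariation, integral_add_measure hf.1.abs hf.2.abs]
  exact (abs_sub _ _).trans (add_le_add abs_integral_le_integral_abs abs_integral_le_integral_abs)

theorem memCzeta_of_continuous_of_abs_le {ζ t : ℝ} (hζ : 0 < ζ) {φ : Phase n → ℝ}
    (hφ : Continuous φ) {B : ℝ} (hB : ∀ z, |φ z| ≤ B) : MemCzeta ζ t φ := by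
  have hw (z : Phase n) : 0 ≤ ‖z.2.1‖ ^ ζ := by positivity
  refine ⟨hφ.continuousOn, ⟨B, fun z _ => ?_⟩, fun ε hε => ?_⟩
  · nlinarith [hB z, abs_nonneg (φ z), hw z]
  · obtain ⟨R, hR⟩ :=
      ((tendsto_rpow_atTop hζ).eventually_ge_atTop (B / ε)).exists_forall_of_atTop
    refine ⟨R, fun z _ hz => ?_⟩
    have := (div_le_iff₀ hε).1 (hR _ hz)
    nlinarith [hB z]

theorem MemU.ae_mem_omegaSet {ζ t : ℝ} {μ : SignedMeasure (Phase n)} (hμ : MemU ζ t μ) :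
    ∀ᵐ z ∂μ.totalVariation, z ∈ OmegaSet n t :=
  mem_ae_iff.2 hμ.1

theorem integrable_of_memCzeta {ζ t : ℝ} {μ : SignedMeasure (Phase n)} (hμ : MemU ζ t μ)
    {φ : Phase n → ℝ} (hφ : MemCzeta ζ t φ) : Integrable φ μ.totalVariation := by
  have hmeas : AEStronglyMeasurable φ μ.totalVariation := by
    rw [← Measure.restrict_eq_self_of_ae_mem hμ.ae_mem_omegaSet]
    exact hφ.1.aestronglyMeasurable (measurableSet_Icc.preimage measurable_snd.snd)
  obtain ⟨M, hM⟩ := hφ.2.1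
  exact (hμ.2.const_mul M).mono' hmeas (hμ.ae_mem_omegaSet.mono fun z hz => hM z hz)

theorem bddAbove_image_sub_of_memCzeta {ζ t : ℝ} (hζ : 0 ≤ ζ)
    {L : EuclideanSpace ℝ (Fin n) → EuclideanSpace ℝ (Fin n) → ℝ} {cL : ℝ}
    (hcL : ∀ x q, cL ≤ L x q)
    (hL : ∀ M : ℝ, ∃ R : ℝ, ∀ x q, R ≤ ‖q‖ → M * (1 + ‖q‖ ^ ζ) ≤ L x q)
    {φ : Phase n → ℝ} (hφ : MemCzeta ζ t φ) :
    BddAbove ((fun z : Phase n => φ z - L z.1 z.2.1) '' OmegaSet n t) := by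
  obtain ⟨M, hM⟩ := hφ.2.1
  obtain ⟨R, hR⟩ := hL M
  refine ⟨max 0 (M * (1 + R ^ ζ) - cL), ?_⟩
  rintro _ ⟨z, hz, rfl⟩
  have hφz := (abs_le.1 (hM z hz)).2
  have hw : 0 ≤ ‖z.2.1‖ ^ ζ := by positivity
  rcases le_total R ‖z.2.1‖ with hq | hq
  · exact le_max_of_le_left (by linarith [hR z.1 z.2.1 hq])
  · have hM0 : 0 ≤ M :=
      nonneg_of_mul_nonneg_left ((abs_nonneg _).trans (hM z hz)) (by positivity)
    have := Real.rpow_le_rpow (norm_nonneg _) hq hζ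
    refine le_max_of_le_right ?_
    nlinarith [hcL z.1 z.2.1]

theorem fVal_le {t : ℝ} (ht : 0 ≤ t)
    {L : EuclideanSpace ℝ (Fin n) → EuclideanSpace ℝ (Fin n) → ℝ}
    {φ : Phase n → ℝ} {B : ℝ} (h : ∀ z ∈ OmegaSet n t, φ z - L z.1 z.2.1 ≤ B) :
    fVal t L φ ≤ t * B :=
  mul_le_mul_of_nonneg_left
    (csSup_le (Nonempty.image _ ⟨0, by simp [OmegaSet, ht]⟩) <| by
      rintro _ ⟨z, hz, rfl⟩
      exact h z hz) ht

theorem sInt_sub_fVal_le_eInt {ζ t : ℝ} (hζ : 0 ≤ ζ)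
    {L : EuclideanSpace ℝ (Fin n) → EuclideanSpace ℝ (Fin n) → ℝ} {cL : ℝ}
    (hcL : ∀ x q, cL ≤ L x q)
    (hL : ∀ M : ℝ, ∃ R : ℝ, ∀ x q, R ≤ ‖q‖ → M * (1 + ‖q‖ ^ ζ) ≤ L x q)
    {μ : SignedMeasure (Phase n)} (hμU : MemU ζ t μ) (hμ : 0 ≤ μ) (hmass : μ univ = t)
    {φ : Phase n → ℝ} (hφ : MemCzeta ζ t φ) :
    ((sInt μ φ - fVal t L φ : ℝ) : EReal) ≤
      eInt μ.totalVariation (fun z => L z.1 z.2.1) := by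
  set S := sSup ((fun z : Phase n => φ z - L z.1 z.2.1) '' OmegaSet n t)
  have hS (z : Phase n) (hz : z ∈ OmegaSet n t) : φ z - L z.1 z.2.1 ≤ S :=
    le_csSup (bddAbove_image_sub_of_memCzeta hζ hcL hL hφ) ⟨z, hz, rfl⟩
  have hmass' : μ.totalVariation.real univ = t := by
    simpa [sInt_eq_integral_of_nonneg hμ] using (sInt_const μ 1).trans (by rw [hmass, mul_one])
  have hφ_int := integrable_of_memCzeta hμU hφ
  calc ((sInt μ φ - fVal t L φ : ℝ) : EReal)
      = ((∫ z, (φ z - S) ∂μ.totalVariation : ℝ) : EReal) := by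
        rw [sInt_eq_integral_of_nonneg hμ, fVal, integral_sub hφ_int (integrable_const S),
          integral_const, hmass', smul_eq_mul]
    _ = eInt μ.totalVariation (fun z => φ z - S) :=
        (eInt_eq_integral (hφ_int.sub (integrable_const S))).symm
    _ ≤ _ := eInt_mono_ae (hμU.ae_mem_omegaSet.mono fun z hz => by linarith [hS z hz])

theorem integral_min_natCast_le_fStar {ζ t : ℝ} (hζ : 0 < ζ) (ht : 0 ≤ t)
    {L : EuclideanSpace ℝ (Fin n) → EuclideanSpace ℝ (Fin n) → ℝ}
    (hLcont : Continuous fun z : EuclideanSpace ℝ (Fin n) × EuclideanSpace ℝ (Fin n) =>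
      L z.1 z.2)
    {cL : ℝ} (hcL : ∀ x q, cL ≤ L x q) {μ : SignedMeasure (Phase n)} (hμ : 0 ≤ μ)
    (k : ℕ) :
    ((∫ z, min (L z.1 z.2.1) k ∂μ.totalVariation : ℝ) : EReal) ≤ fStar ζ t L μ := by
  have hmem : MemCzeta ζ t fun z : Phase n => min (L z.1 z.2.1) (k : ℝ) :=
    memCzeta_of_continuous_of_abs_le hζ
      ((hLcont.comp (continuous_fst.prodMk continuous_snd.fst)).min continuous_const)
      fun z => abs_min_natCast_le (hcL z.1 z.2.1) k
  refine le_iSup₂_of_le _ hmem ?_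
  have := fVal_le ht (L := L) (B := 0) fun z _ => sub_nonpos.2 (min_le_left _ (k : ℝ))
  rw [← EReal.coe_sub, EReal.coe_le_coe_iff, sInt_eq_integral_of_nonneg hμ]
  linarith

theorem fStar_eq_top_of_lt_sInt {ζ t : ℝ} (hζ : 0 < ζ) (ht : 0 ≤ t)
    {L : EuclideanSpace ℝ (Fin n) → EuclideanSpace ℝ (Fin n) → ℝ} {cL : ℝ}
    (hcL : ∀ x q, cL ≤ L x q) {μ : SignedMeasure (Phase n)} (φ : Phase n →ᵇ ℝ) {B : ℝ}
    (hφB : ∀ z, φ z ≤ B) (hgap : t * B < sInt μ φ) : fStar ζ t L μ = ⊤ := by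
  rw [EReal.eq_top_iff_forall_lt]
  intro r
  obtain ⟨c, hcr, hc0⟩ : ∃ c : ℝ, r < c * (sInt μ φ - t * B) + t * cL ∧ 0 ≤ c :=
    ((((tendsto_id.atTop_mul_const (sub_pos.2 hgap)).atTop_add tendsto_const_nhds)
      |>.eventually_gt_atTop r).and (eventually_ge_atTop 0)).exists
  have hmem : MemCzeta ζ t fun z => c * φ z :=
    memCzeta_of_continuous_of_abs_le hζ (continuous_const.mul φ.continuous) fun z => by
      rw [abs_mul, abs_of_nonneg hc0]
      exact mul_le_mul_of_nonneg_left (φ.norm_coe_le_norm z) hc0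
  refine lt_of_lt_of_le ?_ (le_iSup₂_of_le _ hmem le_rfl)
  have := fVal_le ht (L := L) (φ := fun z => c * φ z) (B := c * B - cL) fun z _ => by
    nlinarith [hφB z, hcL z.1 z.2.1]
  rw [← EReal.coe_sub, EReal.coe_lt_coe_iff, sInt_const_mul]
  nlinarith

theorem exists_boundedContinuous_le_one_lt_sInt {μ : SignedMeasure (Phase n)}
    (hμ : ¬ 0 ≤ μ) :
    ∃ φ : Phase n →ᵇ ℝ, (∀ z, φ z ≤ 1) ∧ μ univ < sInt μ φ := by
  classical
  set p := μ.toJordanDecomposition.posPart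
  set m := μ.toJordanDecomposition.negPart
  have hN : 0 < m.real univ := by
    have : NeZero m := ⟨mt SignedMeasure.toJordanDecomposition_negPart_eq_zero_iff.1 hμ⟩
    exact measureReal_univ_pos
  obtain ⟨S, hS, hpS, hmS⟩ := μ.toJordanDecomposition.mutuallySingular
  -- `u` is the Hahn sign of `μ`, so `sInt μ u = |μ| univ = μ univ + 2 m univ`; a bounded
  -- continuous `L¹(|μ|)`-approximation of `u`, capped at `1`, still beats `μ univ`.
  set u : Phase n → ℝ := S.piecewise (fun _ => -1) (fun _ => 1)
  have hu_le (z : Phase n) : |u z| ≤ 1 ∧ u z ≤ 1 := by by_cases hz : z ∈ S <;> simp [u, hz]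
  have hu_int : Integrable u μ.totalVariation :=
    .of_bound (measurable_const.piecewise hS measurable_const).aestronglyMeasurable 1
      (ae_of_all _ fun z => (hu_le z).1)
  have hu : sInt μ u = p.real univ + m.real univ := by
    have hup : u =ᵐ[p] fun _ => 1 :=
      (measure_eq_zero_iff_ae_notMem.1 hpS).mono fun z hz => S.piecewise_eq_of_notMem _ _ hz
    have hum : u =ᵐ[m] fun _ => -1 :=
      (show ∀ᵐ z ∂m, z ∈ S from mem_ae_iff.2 hmS).mono fun z hz =>
        S.piecewise_eq_of_mem _ _ hz
    rw [sInt, integral_congr_ae hup, integral_congr_ae hum]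
    simp
  obtain ⟨ψ, hψu, -⟩ := hu_int.exists_boundedContinuous_integral_sub_le (half_pos hN)
  set φ : Phase n →ᵇ ℝ := ψ ⊓ 1
  have hφ_int : Integrable φ μ.totalVariation := φ.integrable μ.totalVariation
  have hclose : ∫ z, |φ z - u z| ∂μ.totalVariation ≤ m.real univ / 2 := by
    refine (integral_mono (hφ_int.sub hu_int).abs
      (hu_int.sub (ψ.integrable μ.totalVariation)).norm fun z => ?_).trans hψu
    have := abs_min_sub_min_le_max (ψ z) 1 (u z) 1
    rw [min_eq_left (hu_le z).2, sub_self, abs_zero, max_eq_left (abs_nonneg _)] at this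
    rw [Real.norm_eq_abs, Pi.sub_apply, Pi.sub_apply, abs_sub_comm (u z)]
    exact this
  have hdiff := abs_sInt_le (f := fun z => φ z - u z) (hφ_int.sub hu_int)
  rw [sInt_sub hφ_int hu_int, hu] at hdiff
  refine ⟨φ, fun z => min_le_right (ψ z) 1, ?_⟩
  rw [μ.apply_eq_posPart_real_sub_negPart_real .univ]
  linarith [(abs_le.1 hdiff).1]

theorem exists_boundedContinuous_mul_lt_sInt {μ : SignedMeasure (Phase n)} {t : ℝ}
    (h : ¬ (0 ≤ μ ∧ μ univ = t)) :
    ∃ (φ : Phase n →ᵇ ℝ) (B : ℝ), (∀ z, φ z ≤ B) ∧ t * B < sInt μ φ := by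
  rcases lt_or_ge (μ univ) t with hlt | hge
  · refine ⟨.const _ (-1), -1, fun _ => le_rfl, ?_⟩
    change t * -1 < sInt μ fun _ => -1
    rw [sInt_const]
    linarith
  by_cases hμ : 0 ≤ μ
  · refine ⟨.const _ 1, 1, fun _ => le_rfl, ?_⟩
    change t * 1 < sInt μ fun _ => 1
    rw [sInt_const]
    exact mul_lt_mul_of_pos_right (hge.lt_of_ne fun he => h ⟨hμ, he.symm⟩) one_pos
  · obtain ⟨φ, hφ1, hφ⟩ := exists_boundedContinuous_le_one_lt_sInt hμ
    exact ⟨φ, 1, hφ1, by linarith⟩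

end Phase

/-- computation of the conjugate of `f(φ) = t·sup_Ω(φ − L)`: for `μ ∈ U`,
`f*(μ) = ∫_Ω L dμ` if `μ ≥ 0` and `∫_Ω dμ = t`, and `f*(μ) = +∞` otherwise. -/
theorem fstar_computation {n : ℕ} (ζ t : ℝ) (hζ : 1 < ζ) (ht : 0 < t)
    (L : EuclideanSpace ℝ (Fin n) → EuclideanSpace ℝ (Fin n) → ℝ)
    (hLcont : Continuous fun z : EuclideanSpace ℝ (Fin n) × EuclideanSpace ℝ (Fin n) =>
      L z.1 z.2)
    (hLbelow : ∃ c : ℝ, ∀ x q, c ≤ L x q)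
    (hLsuper : ∀ M : ℝ, ∃ R : ℝ, ∀ (x q : EuclideanSpace ℝ (Fin n)), R ≤ ‖q‖ →
      M * (1 + ‖q‖ ^ ζ) ≤ L x q)
    (μ : SignedMeasure (Phase n)) (hμU : MemU ζ t μ) :
    (0 ≤ μ → sInt μ (fun _ => (1 : ℝ)) = t →
      fStar ζ t L μ = eInt μ.totalVariation (fun z => L z.1 z.2.1)) ∧
    (¬ (0 ≤ μ ∧ sInt μ (fun _ => (1 : ℝ)) = t) → fStar ζ t L μ = ⊤) := by
  obtain ⟨cL, hcL⟩ := hLbelow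
  have hζ0 : 0 < ζ := zero_lt_one.trans hζ
  rw [sInt_const, mul_one]
  refine ⟨fun hμ hmass => le_antisymm ?_ ?_, fun h => ?_⟩
  · refine iSup₂_le fun φ hφ => ?_
    rw [← EReal.coe_sub]
    exact sInt_sub_fVal_le_eInt hζ0.le hcL hLsuper hμU hμ hmass hφ
  · exact le_of_tendsto'
      (tendsto_integral_min_natCast_eInt
          (hLcont.comp (continuous_fst.prodMk continuous_snd.fst)).measurable
        fun z => hcL z.1 z.2.1)
      (integral_min_natCast_le_fStar hζ0 ht.le hLcont hcL hμ)
  · obtain ⟨φ, B, hφB, hgap⟩ := exists_boundedContinuous_mul_lt_sInt h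
    exact fStar_eq_top_of_lt_sInt hζ0 ht.le hcL φ hφB hgap
end
end

section
/- Superquadratic barrier: suppose H(x,p) ≥ |p|^m/C − C with m > 2 and 0 ≤ a ∈ C²(T^n). Set m' = m/(m−1) ∈ (1,2) and ψ(x,t) = λ t^{−1/(m−1)} (|x|² + λt)^{m'/2} + Ct on R^n × (0,∞). Then for λ > 0 sufficiently large (depending only on C, n, m), ψ satisfies ψ_t − a(x)Δψ + H(x,Dψ) > 0 on R^n × (0,∞); i.e., ψ is a classical strict supersolution of the HJB equation. -/
/-!
Write `Q = |x|² + λt`, `z = |x|² / Q ∈ [0, 1)` and `T = λ t^(-1/(m-1) - 1) Q^(m'/2)`; since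
`m' = 1 + 1/(m-1)` this is the paper's `λ t^(-m') Q^(m'/2)`. All three terms of the equation are
multiples of `T`:
`ψ_t = T ((m'/2)(1 - z) - 1/(m-1)) + C`;
`Δψ ≤ T (m' n / λ)(1 - z)`, because `m' < 2` makes the radial part of the Laplacian nonpositive;
`|Dψ|^m = T λ^(m-1) (m')^m z^(m/2)`, because `m m' = m + m'`.
So the residual is at least `T` times
`(m'/2 - C m' n / λ)(1 - z) - 1/(m-1) + (λ^(m-1) (m')^m / C) z^(m/2)`.
As `λ → ∞` the diffusion loss `C m' n / λ` drops below half of the gap `m'/2 - 1/(m-1) > 0`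
(this gap is where `m > 2` enters), so near `z = 0` the gap wins, and away from `z = 0` the
gradient term, which grows like `λ^(m-1)`, wins.
-/

open Set Filter
open scoped Topology

noncomputable section

/-- Laplacian of `f : ℝ^n → ℝ` at `x`. -/
def lap {n : ℕ} (f : EuclideanSpace ℝ (Fin n) → ℝ) (x : EuclideanSpace ℝ (Fin n)) : ℝ :=
  ∑ i, iteratedFDeriv ℝ 2 f x ![EuclideanSpace.single i 1, EuclideanSpace.single i 1]

/-- The superquadratic barrier
`ψ(x,t) = λ t^{−1/(m−1)} (|x|² + λt)^{m'/2} + Ct`. -/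
def barrier {n : ℕ} (lam C m m' : ℝ) (x : EuclideanSpace ℝ (Fin n)) (t : ℝ) : ℝ :=
  lam * t ^ (-(1 / (m - 1))) * (‖x‖ ^ 2 + lam * t) ^ (m' / 2) + C * t

open scoped RealInnerProductSpace

section RadialProfile

variable {F : Type*} [NormedAddCommGroup F] [InnerProductSpace ℝ F] {c : ℝ}

theorem hasFDerivAt_rpow_norm_sq_add (β : ℝ) (hc : 0 < c) (y : F) :
    HasFDerivAt (fun y : F => (‖y‖ ^ 2 + c) ^ β)
      ((2 * β * (‖y‖ ^ 2 + c) ^ (β - 1)) • innerSL ℝ y) y := by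
  convert (((hasStrictFDerivAt_norm_sq y).hasFDerivAt).add_const c).rpow_const
    (p := β) (Or.inl (by positivity)) using 1
  ext v
  simp only [smul_apply, smul_eq_mul, nsmul_eq_mul]
  ring

theorem contDiff_rpow_norm_sq_add {k : WithTop ℕ∞} (β : ℝ) (hc : 0 < c) :
    ContDiff ℝ k (fun y : F => (‖y‖ ^ 2 + c) ^ β) :=
  contDiff_iff_contDiffAt.2 fun _ =>
    ((contDiff_norm_sq ℝ).add contDiff_const).contDiffAt.rpow_const_of_ne (by positivity)

theorem iteratedFDeriv_two_rpow_norm_sq_add (β : ℝ) (hc : 0 < c) (x v : F) :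
    iteratedFDeriv ℝ 2 (fun y : F => (‖y‖ ^ 2 + c) ^ β) x ![v, v]
      = 4 * β * (β - 1) * (‖x‖ ^ 2 + c) ^ (β - 2) * ⟪x, v⟫ ^ 2
          + 2 * β * (‖x‖ ^ 2 + c) ^ (β - 1) * ‖v‖ ^ 2 := by
  have hD : fderiv ℝ (fun y : F => (‖y‖ ^ 2 + c) ^ β)
      = fun y => (2 * β * (‖y‖ ^ 2 + c) ^ (β - 1)) • innerSL ℝ y :=
    funext fun y => (hasFDerivAt_rpow_norm_sq_add β hc y).fderiv
  have hD2 : HasFDerivAt (fun y => (2 * β * (‖y‖ ^ 2 + c) ^ (β - 1)) • innerSL ℝ y) _ x :=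
    ((hasFDerivAt_rpow_norm_sq_add (β - 1) hc x).const_mul (2 * β)).smul
      (innerSL ℝ).hasFDerivAt
  rw [iteratedFDeriv_two_apply, hD, hD2.fderiv]
  simp only [Fin.isValue, Matrix.cons_val_zero, Matrix.cons_val_one, add_apply,
    smul_apply, ContinuousLinearMap.smulRight_apply, innerSL_apply_apply, smul_eq_mul]
  rw [innerSL_apply_apply, real_inner_self_eq_norm_sq]
  ring_nf

end RadialProfile

section Laplacian

variable {n : ℕ}

theorem lap_const_mul_add {f : EuclideanSpace ℝ (Fin n) → ℝ} (k d : ℝ) (hf : ContDiff ℝ 2 f)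
    (x : EuclideanSpace ℝ (Fin n)) : lap (fun y => k * f y + d) x = k * lap f x := by
  have hk : ContDiffAt ℝ 2 (fun y => k * f y) x := (hf.const_smul k).contDiffAt
  simp only [lap, Finset.mul_sum]
  refine Finset.sum_congr rfl fun i _ => ?_
  rw [fun_iteratedFDeriv_add_apply hk contDiffAt_const, iteratedFDeriv_const_of_ne two_ne_zero,
    Pi.zero_apply, add_zero, ← smul_eq_mul, ← smul_apply,
    ← iteratedFDeriv_const_smul_apply' hf.contDiffAt]
  rfl

theorem lap_rpow_norm_sq_add (β : ℝ) (hc : 0 < c) (x : EuclideanSpace ℝ (Fin n)) :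
    lap (fun y => (‖y‖ ^ 2 + c) ^ β) x
      = 4 * β * (β - 1) * (‖x‖ ^ 2 + c) ^ (β - 2) * ‖x‖ ^ 2
          + 2 * β * n * (‖x‖ ^ 2 + c) ^ (β - 1) := by
  have hparseval : ∑ i, ⟪x, EuclideanSpace.single i (1 : ℝ)⟫ ^ 2 = ‖x‖ ^ 2 := by
    simp [EuclideanSpace.norm_sq_eq, EuclideanSpace.inner_single_right]
  simp only [lap, iteratedFDeriv_two_rpow_norm_sq_add β hc, Finset.sum_add_distrib,
    ← Finset.mul_sum, hparseval, PiLp.norm_single, norm_one, one_pow, mul_one, Finset.sum_const,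
    Finset.card_univ, Fintype.card_fin, nsmul_eq_mul]
  ring

end Laplacian

section Barrier

variable {n : ℕ} {lam C m m' t : ℝ}

theorem hasDerivAt_barrier_time (x : EuclideanSpace ℝ (Fin n)) (hlam : 0 < lam) (ht : 0 < t) :
    HasDerivAt (fun s => barrier lam C m m' x s)
      (lam * t ^ (-(1 / (m - 1)) - 1) * (‖x‖ ^ 2 + lam * t) ^ (m' / 2)
        * (m' / 2 * (lam * t / (‖x‖ ^ 2 + lam * t)) - 1 / (m - 1)) + C) t := by
  have hQ : 0 < ‖x‖ ^ 2 + lam * t := by positivity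
  have hpow : HasDerivAt (fun s : ℝ => s ^ (-(1 / (m - 1))))
      (-(1 / (m - 1)) * t ^ (-(1 / (m - 1)) - 1)) t :=
    Real.hasDerivAt_rpow_const (Or.inl ht.ne')
  have hQpow : HasDerivAt (fun s : ℝ => (‖x‖ ^ 2 + lam * s) ^ (m' / 2))
      (m' / 2 * (‖x‖ ^ 2 + lam * t) ^ (m' / 2 - 1) * lam) t :=
    (((hasDerivAt_id t).const_mul lam).const_add _).rpow_const (Or.inl hQ.ne') |>.congr_deriv
      (by simp only [id, mul_one]; ring)
  refine (((hpow.const_mul lam).mul hQpow).add ((hasDerivAt_id t).const_mul C)).congr_deriv ?_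
  rw [Real.rpow_sub_one ht.ne', Real.rpow_sub_one hQ.ne']
  field_simp
  ring

theorem gradient_barrier (x : EuclideanSpace ℝ (Fin n)) (hlam : 0 < lam) (ht : 0 < t) :
    gradient (fun y => barrier lam C m m' y t) x
      = (lam * t ^ (-(1 / (m - 1))) * m' * (‖x‖ ^ 2 + lam * t) ^ (m' / 2 - 1)) • x := by
  refine (hasGradientAt_iff_hasFDerivAt.2 ?_).gradient
  refine (((hasFDerivAt_rpow_norm_sq_add (m' / 2) (by positivity) x).const_mul _).add_const _
    ).congr_fderiv ?_
  ext v
  simp only [smul_apply, coe_innerSL_apply, smul_eq_mul, map_smul,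
    InnerProductSpace.toDual_apply_apply]
  ring

theorem lap_barrier (x : EuclideanSpace ℝ (Fin n)) (hlam : 0 < lam) (ht : 0 < t) :
    lap (fun y => barrier lam C m m' y t) x
      = lam * t ^ (-(1 / (m - 1)) - 1) * (‖x‖ ^ 2 + lam * t) ^ (m' / 2)
        * (m' * (t / (‖x‖ ^ 2 + lam * t)) * ((m' - 2) * (‖x‖ ^ 2 / (‖x‖ ^ 2 + lam * t)) + n)) := by
  have hc : 0 < lam * t := by positivity
  have hQ : 0 < ‖x‖ ^ 2 + lam * t := by positivity
  change lap (fun y => lam * t ^ (-(1 / (m - 1))) * (‖y‖ ^ 2 + lam * t) ^ (m' / 2) + C * t) x = _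
  rw [lap_const_mul_add _ _ (contDiff_rpow_norm_sq_add _ hc), lap_rpow_norm_sq_add _ hc,
    Real.rpow_sub_one ht.ne', Real.rpow_sub_one hQ.ne', Real.rpow_sub hQ, Real.rpow_two]
  field_simp
  ring

theorem norm_gradient_barrier_rpow (x : EuclideanSpace ℝ (Fin n)) (hm : 1 < m)
    (hm' : m' = m / (m - 1)) (hlam : 0 < lam) (ht : 0 < t) :
    ‖gradient (fun y => barrier lam C m m' y t) x‖ ^ m
      = lam * t ^ (-(1 / (m - 1)) - 1) * (‖x‖ ^ 2 + lam * t) ^ (m' / 2)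
        * (lam ^ (m - 1) * m' ^ m * (‖x‖ ^ 2 / (‖x‖ ^ 2 + lam * t)) ^ (m / 2)) := by
  have hm1 : m - 1 ≠ 0 := by linarith
  have hQ : 0 < ‖x‖ ^ 2 + lam * t := by positivity
  have hm'0 : 0 < m' := by rw [hm']; exact div_pos (by linarith) (by linarith)
  have ht_exp : -(1 / (m - 1)) * m = -(1 / (m - 1)) - 1 := by field_simp; ring
  have hQ_exp : (m' / 2 - 1) * m = m' / 2 - m / 2 := by rw [hm']; field_simp; ring
  have hx_exp : (‖x‖ ^ 2) ^ (m / 2) = ‖x‖ ^ m := by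
    rw [← Real.rpow_natCast_mul (norm_nonneg x)]; push_cast; ring_nf
  rw [gradient_barrier x hlam ht, norm_smul, Real.norm_of_nonneg (by positivity),
    Real.mul_rpow (by positivity) (norm_nonneg x), Real.mul_rpow (by positivity) (by positivity),
    Real.mul_rpow (by positivity) hm'0.le, Real.mul_rpow hlam.le (by positivity),
    ← Real.rpow_mul ht.le, ← Real.rpow_mul hQ.le, ht_exp, hQ_exp,
    Real.div_rpow (by positivity) hQ.le, hx_exp, Real.rpow_sub hQ, Real.rpow_sub_one hlam.ne']
  field_simp

theorem barrier_residual_ge {H : EuclideanSpace ℝ (Fin n) → ℝ} {a : ℝ}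
    (hlow : ∀ p, ‖p‖ ^ m / C - C ≤ H p) (ha0 : 0 ≤ a) (haC : a ≤ C) (hm : 2 < m)
    (hm' : m' = m / (m - 1)) (hlam : 0 < lam) (ht : 0 < t) (x : EuclideanSpace ℝ (Fin n)) :
    lam * t ^ (-(1 / (m - 1)) - 1) * (‖x‖ ^ 2 + lam * t) ^ (m' / 2)
        * ((m' / 2 - C * m' * n / lam) * (1 - ‖x‖ ^ 2 / (‖x‖ ^ 2 + lam * t)) - 1 / (m - 1)
          + lam ^ (m - 1) * m' ^ m / C * (‖x‖ ^ 2 / (‖x‖ ^ 2 + lam * t)) ^ (m / 2))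
      ≤ deriv (fun s => barrier lam C m m' x s) t
        - a * lap (fun y => barrier lam C m m' y t) x
        + H (gradient (fun y => barrier lam C m m' y t) x) := by
  have hQ : 0 < ‖x‖ ^ 2 + lam * t := by positivity
  have hm'0 : 0 < m' := by rw [hm']; exact div_pos (by linarith) (by linarith)
  have hm'2 : m' ≤ 2 := by rw [hm', div_le_iff₀ (by linarith)]; linarith
  have hlap : a * lap (fun y => barrier lam C m m' y t) x
      ≤ C * (lam * t ^ (-(1 / (m - 1)) - 1) * (‖x‖ ^ 2 + lam * t) ^ (m' / 2)
        * (m' * (t / (‖x‖ ^ 2 + lam * t)) * n)) := by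
    refine (mul_le_mul_of_nonneg_left ?_ ha0).trans (by gcongr)
    rw [lap_barrier x hlam ht]
    gcongr
    exact add_le_of_nonpos_left (mul_nonpos_of_nonpos_of_nonneg (by linarith) (by positivity))
  have hH := hlow (gradient (fun y => barrier lam C m m' y t) x)
  rw [norm_gradient_barrier_rpow x (by linarith) hm' hlam ht] at hH
  have h1z : 1 - ‖x‖ ^ 2 / (‖x‖ ^ 2 + lam * t) = lam * t / (‖x‖ ^ 2 + lam * t) := by
    field_simp; ring
  rw [(hasDerivAt_barrier_time x hlam ht).deriv, h1z]
  have hcancel : C * m' * n / lam * (lam * t / (‖x‖ ^ 2 + lam * t))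
      = C * (m' * (t / (‖x‖ ^ 2 + lam * t)) * n) := by
    field_simp
  set T := lam * t ^ (-(1 / (m - 1)) - 1) * (‖x‖ ^ 2 + lam * t) ^ (m' / 2)
  set z := ‖x‖ ^ 2 / (‖x‖ ^ 2 + lam * t)
  have hsplit : T * ((m' / 2 - C * m' * n / lam) * (lam * t / (‖x‖ ^ 2 + lam * t)) - 1 / (m - 1)
        + lam ^ (m - 1) * m' ^ m / C * z ^ (m / 2))
      = T * (m' / 2 * (lam * t / (‖x‖ ^ 2 + lam * t)) - 1 / (m - 1)) + C
        - C * (T * (m' * (t / (‖x‖ ^ 2 + lam * t)) * n))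
        + (T * (lam ^ (m - 1) * m' ^ m * z ^ (m / 2)) / C - C) := by
    linear_combination (-T) * hcancel
  linarith

theorem eventually_forall_pos_mul_rpow_add_sub_mul {p α θ : ℝ} (hp : 0 < p) (hα : 0 ≤ α)
    (hθ : 0 < θ) : ∀ᶠ A in atTop, ∀ z ∈ Icc (0 : ℝ) 1, 0 < A * z ^ p + θ - (α + θ) * z := by
  filter_upwards [eventually_ge_atTop ((α + θ) / (θ / (α + θ)) ^ p)] with A hA z ⟨hz0, hz1⟩
  have hA0 : 0 ≤ A := le_trans (by positivity) hA
  rcases lt_or_ge z (θ / (α + θ)) with hz | hz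
  · have hzp : 0 ≤ A * z ^ p := by positivity
    have := (lt_div_iff₀ (by positivity)).1 hz
    linarith
  · have hzp : (α + θ) ≤ A * z ^ p :=
      calc α + θ ≤ A * (θ / (α + θ)) ^ p := (div_le_iff₀ (by positivity)).1 hA
        _ ≤ A * z ^ p := by gcongr
    nlinarith

theorem eventually_barrier_coeff_pos {C m m' : ℝ} (n : ℕ) (hC : 0 < C) (hm : 2 < m)
    (hm' : m' = m / (m - 1)) :
    ∀ᶠ lam in atTop, ∀ z ∈ Icc (0 : ℝ) 1,
      0 < (m' / 2 - C * m' * n / lam) * (1 - z) - 1 / (m - 1)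
        + lam ^ (m - 1) * m' ^ m / C * z ^ (m / 2) := by
  obtain ⟨θ, hθ, hθm'⟩ : ∃ θ > 0, m' / 2 = 1 / (m - 1) + 2 * θ := by
    refine ⟨(m' / 2 - 1 / (m - 1)) / 2, ?_, by ring⟩
    have : m' / 2 - 1 / (m - 1) = (m - 2) / (2 * (m - 1)) := by
      rw [hm']; field_simp
    rw [this]
    exact div_pos (div_pos (by linarith) (by linarith)) two_pos
  have hm'0 : 0 < m' := by rw [hm']; exact div_pos (by linarith) (by linarith)
  have hcoeff : Tendsto (fun lam : ℝ => lam ^ (m - 1) * m' ^ m / C) atTop atTop :=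
    ((tendsto_rpow_atTop (by linarith)).atTop_mul_const (by positivity)).atTop_div_const hC
  have hloss : Tendsto (fun lam : ℝ => C * m' * n / lam) atTop (𝓝 0) :=
    tendsto_const_nhds.div_atTop tendsto_id
  filter_upwards [hcoeff.eventually (eventually_forall_pos_mul_rpow_add_sub_mul (p := m / 2)
      (α := 1 / (m - 1)) (by linarith) (one_div_pos.2 (by linarith)).le hθ),
    hloss.eventually (eventually_le_nhds hθ)] with lam hpos hr z hz
  rw [hθm']
  linarith [hpos z hz, mul_le_mul_of_nonneg_right hr (sub_nonneg.2 hz.2)]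

theorem barrier_strict_supersolution_general {n : ℕ}
    (H : EuclideanSpace ℝ (Fin n) → EuclideanSpace ℝ (Fin n) → ℝ)
    (C m m' : ℝ) (hC : 0 < C) (hm : 2 < m) (hm' : m' = m / (m - 1))
    (hlow : ∀ x p, ‖p‖ ^ m / C - C ≤ H x p)
    (aD : EuclideanSpace ℝ (Fin n) → ℝ)
    (haD0 : ∀ x, 0 ≤ aD x) (haDC : ∀ x, aD x ≤ C) :
    ∃ lam₀ > 0, ∀ lam : ℝ, lam₀ ≤ lam →
      ∀ (x : EuclideanSpace ℝ (Fin n)) (t : ℝ), 0 < t →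
        0 < deriv (fun s => barrier lam C m m' x s) t
              - aD x * lap (fun y => barrier lam C m m' y t) x
              + H x (gradient (fun y => barrier lam C m m' y t) x) := by
  obtain ⟨lam₀, hlam₀⟩ :=
    eventually_atTop.1 ((eventually_barrier_coeff_pos n hC hm hm').and (eventually_gt_atTop 0))
  refine ⟨max lam₀ 1, by positivity, fun lam hlam x t ht => ?_⟩
  obtain ⟨hcoeff, hlam0⟩ := hlam₀ lam (le_of_max_le_left hlam)
  have hz : ‖x‖ ^ 2 / (‖x‖ ^ 2 + lam * t) ∈ Icc (0 : ℝ) 1 :=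
    ⟨by positivity, div_le_one_of_le₀ (by nlinarith) (by positivity)⟩
  exact (mul_pos (by positivity) (hcoeff _ hz)).trans_le
    (barrier_residual_ge (hlow x) (haD0 x) (haDC x) hm hm' hlam0 ht x)

/-- superquadratic barrier.  If `H(x,p) ≥ |p|^m/C − C` with `m > 2`,
`m' = m/(m−1) ∈ (1,2)`, and `0 ≤ a ≤ C` is `C²`, then for all sufficiently large `λ`
(depending only on `C`, `n`, `m`), `ψ` is a classical strict supersolution:
`ψ_t − a(x)Δψ + H(x,Dψ) > 0` on `ℝ^n × (0,∞)`. -/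
theorem barrier_strict_supersolution {n : ℕ}
    (H : EuclideanSpace ℝ (Fin n) → EuclideanSpace ℝ (Fin n) → ℝ)
    (C m m' : ℝ) (hC : 0 < C) (hm : 2 < m) (hm' : m' = m / (m - 1))
    (hlow : ∀ x p, ‖p‖ ^ m / C - C ≤ H x p)
    (aD : EuclideanSpace ℝ (Fin n) → ℝ) (haD : ContDiff ℝ 2 aD)
    (haD0 : ∀ x, 0 ≤ aD x) (haDC : ∀ x, aD x ≤ C) :
    ∃ lam₀ > 0, ∀ lam : ℝ, lam₀ ≤ lam →
      ∀ (x : EuclideanSpace ℝ (Fin n)) (t : ℝ), 0 < t →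
        0 < deriv (fun s => barrier lam C m m' x s) t
              - aD x * lap (fun y => barrier lam C m m' y t) x
              + H x (gradient (fun y => barrier lam C m m' y t) x) :=
  barrier_strict_supersolution_general H C m m' hC hm hm' hlow aD haD0 haDC
end Barrier
end
end
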